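/- Fix positive integers r, n, ε = e^{2πi/r}, and a word w = a₁⋯a_k in letters a_s = z_{i_s,j_s}. Then Σ_{σ ∈ Σ_k} S_{σ·w}(n) = Σ_{partitions B = {B₁,…,B_q} of {1,…,k}} (|B₁|−1)!⋯(|B_q|−1)! · A_{[a_i,i∈B₁]}(n) ⋯ A_{[a_i,i∈B_q]}(n), where S denotes the weak-inequality multiple harmonic sum and [a_i, i∈B] merges the letters indexed by B (first subscripts added, second subscripts added mod r). -/

import Mathlib

open Finsupp Finset

/-- A letter `z_{i,j}`: first subscript a natural number (positive in intended use),
second subscript in `ℤ/r`. -/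
abbrev QLetter (r : ℕ) := ℕ × ZMod r

/-- The Euler algebra `E_r` as a vector space: formal `ℂ`-linear combinations of words. -/
abbrev EulerAlg (r : ℕ) := List (QLetter r) →₀ ℂ

/-- `[a,b]`: add first subscripts, add second subscripts mod `r`. -/
def ladd {r : ℕ} (a b : QLetter r) : QLetter r := (a.1 + b.1, a.2 + b.2)

/-- Quasi-shuffle product of two words, inductively. -/
noncomputable def qmulW {r : ℕ} : List (QLetter r) → List (QLetter r) → EulerAlg r
  | [], w => Finsupp.single w 1
  | a :: w, [] => Finsupp.single (a :: w) 1
  | a :: w, b :: v =>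
      (qmulW w (b :: v)).mapDomain (a :: ·) +
      (qmulW (a :: w) v).mapDomain (b :: ·) +
      (qmulW w v).mapDomain (ladd a b :: ·)
  termination_by w v => w.length + v.length

/-- Bilinear extension of the quasi-shuffle product to `E_r`. -/
noncomputable def qmul {r : ℕ} (x y : EulerAlg r) : EulerAlg r :=
  x.sum fun w c => y.sum fun v d => (c * d) • qmulW w v
noncomputable def eps (r : ℕ) : ℂ := Complex.exp (2 * Real.pi * Complex.I / r)

/-- `A_w(n)`, the strict multiple harmonic sum coded by the word `w`. -/
noncomputable def Aword (r n : ℕ) : List (QLetter r) → ℂ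
  | [] => 1
  | a :: t => ∑ m ∈ Finset.Icc 1 n, eps r ^ (a.2.val * m) / (m : ℂ) ^ a.1 * Aword r (m - 1) t

/-- `S_w(n)`, the weak multiple harmonic sum coded by the word `w`. -/
noncomputable def Sword (r n : ℕ) : List (QLetter r) → ℂ
  | [] => 1
  | a :: t => ∑ m ∈ Finset.Icc 1 n, eps r ^ (a.2.val * m) / (m : ℂ) ^ a.1 * Sword r m t



open Nat

section Aux
variable {α β : Type*} [DecidableEq α] [DecidableEq β]


private lemma avoid_parts_eq {s : Finset α} (P : Finpartition s) {B : Finset α}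
    (hB : B ∈ P.parts) : (P.avoid B).parts = P.parts.erase B := by
  ext c
  simp only [Finpartition.mem_avoid, mem_erase]
  constructor
  · rintro ⟨d, hd, hdB, rfl⟩
    have hne : d ≠ B := by rintro rfl; exact hdB le_rfl
    have hdisj : Disjoint d B := P.disjoint hd hB hne
    rw [hdisj.sdiff_eq_left]
    exact ⟨hne, hd⟩
  · rintro ⟨hne, hc⟩
    have hdisj : Disjoint c B := P.disjoint hc hB hne
    exact ⟨c, hc, fun hle => P.ne_bot hc (hdisj.eq_bot_of_le hle), hdisj.sdiff_eq_left⟩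

private lemma finpart_sigma_eq {g : Finset α → Finset α}
    {T₁ T₂ : Finset α} (P₁ : Finpartition (g T₁)) (P₂ : Finpartition (g T₂))
    (h : T₁ = T₂) (hp : P₁.parts = P₂.parts) :
    (⟨T₁, P₁⟩ : Σ T : Finset α, Finpartition (g T)) = ⟨T₂, P₂⟩ := by
  subst h
  exact congrArg _ (Finpartition.ext hp)

private lemma key_count (f : α → β) (s : Finset α) :
    ∑ P ∈ (univ : Finset (Finpartition s)).filter
        (fun P => ∀ B ∈ P.parts, ∀ t ∈ B, ∀ u ∈ B, f t = f u),
      ∏ B ∈ P.parts, (B.card - 1)! =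
    ∏ v ∈ s.image f, ((s.filter fun t => f t = v).card)! := by
  induction s using Finset.strongInduction with
  | _ s ih =>
  rcases s.eq_empty_or_nonempty with rfl | hs
  · have hparts : ∀ P : Finpartition (∅ : Finset α), P.parts = ∅ := fun P =>
      Finpartition.parts_eq_empty_iff.mpr rfl
    have h1 : (univ : Finset (Finpartition (∅ : Finset α))).card = 1 :=
      Fintype.card_eq_one_iff.mpr ⟨⊥, fun Q => Finpartition.ext (by rw [hparts, hparts])⟩
    rw [image_empty, prod_empty]
    rw [Finset.sum_congr rfl (fun P _ => by rw [hparts P, prod_empty]),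
      filter_true_of_mem (fun P _ => by rw [hparts P]; intro B hB; simp at hB),
      Finset.sum_const, h1, smul_eq_mul, mul_one]
  · obtain ⟨x, hx⟩ := hs
    set Fx := s.filter (fun t => f t = f x) with hFx
    have hxFx : x ∈ Fx := mem_filter.mpr ⟨hx, rfl⟩
    have hFxs : Fx ⊆ s := filter_subset _ _
    have hq1 : 1 ≤ Fx.card := card_pos.mpr ⟨x, hxFx⟩
    have hins : ∀ T ∈ (Fx.erase x).powerset, insert x T ⊆ Fx := by
      intro T hT
      exact insert_subset hxFx ((mem_powerset.mp hT).trans (erase_subset _ _))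
    have hinss : ∀ T ∈ (Fx.erase x).powerset, insert x T ⊆ s := fun T hT =>
      (hins T hT).trans hFxs
    have hxT : ∀ T ∈ (Fx.erase x).powerset, x ∉ T := fun T hT h =>
      notMem_erase x Fx (mem_powerset.mp hT h)
    -- the big bijection
    have bij : ∑ P ∈ (univ : Finset (Finpartition s)).filter
        (fun P => ∀ B ∈ P.parts, ∀ t ∈ B, ∀ u ∈ B, f t = f u),
        ∏ B ∈ P.parts, (B.card - 1)! =
        ∑ p ∈ (Fx.erase x).powerset.sigma (fun T =>
            (univ : Finset (Finpartition (s \ insert x T))).filter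
              (fun Q => ∀ B ∈ Q.parts, ∀ t ∈ B, ∀ u ∈ B, f t = f u)),
          (p.1.card)! * ∏ B ∈ p.2.parts, (B.card - 1)! := by
      refine Finset.sum_bij' (i := fun P _ =>
          ⟨(P.part x).erase x, (P.avoid (P.part x)).copy
            (by rw [insert_erase (P.mem_part hx)])⟩)
        (j := fun p hp => p.2.extend (b := insert x p.1)
          (by simp [Finset.bot_eq_empty])
          (disjoint_sdiff_self_left)
          (sdiff_sup_cancel (hinss p.1 (mem_sigma.mp hp).1)))
        ?_ ?_ ?_ ?_ ?_
      · -- hi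
        intro P hP
        have hcond := (mem_filter.mp hP).2
        have hpartmem := P.part_mem.mpr hx
        rw [mem_sigma]
        constructor
        · rw [mem_powerset]
          apply erase_subset_erase
          intro t ht
          exact mem_filter.mpr ⟨P.le hpartmem ht,
            hcond _ hpartmem t ht x (P.mem_part hx)⟩
        · rw [mem_filter]
          refine ⟨mem_univ _, ?_⟩
          intro B hB
          rw [Finpartition.copy_parts, avoid_parts_eq P hpartmem] at hB
          exact hcond B (mem_of_mem_erase hB)
      · -- hj
        intro p hp
        rw [mem_filter]
        refine ⟨mem_univ _, ?_⟩
        intro B hB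
        rw [Finpartition.extend_parts] at hB
        rcases mem_insert.mp hB with rfl | hB
        · intro t ht u hu
          have hf : ∀ y ∈ insert x p.1, f y = f x := by
            intro y hy
            exact (mem_filter.mp (hins p.1 (mem_sigma.mp hp).1 hy)).2
          rw [hf t ht, hf u hu]
        · exact (mem_filter.mp (mem_sigma.mp hp).2).2 B hB
      · -- left_inv
        intro P hP
        apply Finpartition.ext
        rw [Finpartition.extend_parts, Finpartition.copy_parts,
          avoid_parts_eq P (P.part_mem.mpr hx), insert_erase (P.mem_part hx),
          insert_erase (P.part_mem.mpr hx)]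
      · -- right_inv
        intro p hp
        obtain ⟨T, Q⟩ := p
        have hT := (mem_sigma.mp hp).1
        have hpart : (Q.extend (b := insert x T)
            (by simp [Finset.bot_eq_empty]) (disjoint_sdiff_self_left)
            (sdiff_sup_cancel (hinss T hT))).part x = insert x T := by
          apply Finpartition.part_eq_of_mem
          · rw [Finpartition.extend_parts]; exact mem_insert_self _ _
          · exact mem_insert_self _ _
        have hnotin : insert x T ∉ Q.parts := by
          intro hmem
          have := Q.le hmem (mem_insert_self x T)
          exact (mem_sdiff.mp this).2 (mem_insert_self x T)
        refine finpart_sigma_eq (g := fun T => s \ insert x T) _ _ ?_ ?_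
        · rw [hpart, erase_insert (hxT T hT)]
        · rw [Finpartition.copy_parts, hpart,
            avoid_parts_eq _ (by rw [Finpartition.extend_parts]; exact mem_insert_self _ _),
            Finpartition.extend_parts, erase_insert hnotin]
      · -- weights
        intro P hP
        dsimp only
        rw [Finpartition.copy_parts, avoid_parts_eq P (P.part_mem.mpr hx),
          card_erase_of_mem (P.mem_part hx)]
        exact (Finset.mul_prod_erase P.parts _ (P.part_mem.mpr hx)).symm
    have hssub : ∀ T ∈ (Fx.erase x).powerset, s \ insert x T ⊂ s := fun T hT =>
      Finset.sdiff_ssubset (hinss T hT) (insert_nonempty x T)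
    set C := ∏ v ∈ (s.image f).erase (f x), ((s.filter fun t => f t = v).card)! with hC
    have hterm : ∀ T ∈ (Fx.erase x).powerset,
        (∏ v ∈ (s \ insert x T).image f,
          (((s \ insert x T).filter fun t => f t = v).card)!) =
        (Fx.card - 1 - T.card)! * C := by
      intro T hT
      have h1 : ∏ v ∈ (s \ insert x T).image f,
          (((s \ insert x T).filter fun t => f t = v).card)! =
          ∏ v ∈ s.image f, (((s \ insert x T).filter fun t => f t = v).card)! := by
        apply prod_subset (image_subset_image sdiff_subset)
        intro v hv hv'
        have he : (s \ insert x T).filter (fun t => f t = v) = ∅ := by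
          rw [filter_eq_empty_iff]
          intro t ht hft
          exact hv' (mem_image.mpr ⟨t, ht, hft⟩)
        rw [he]
        simp
      rw [h1, ← Finset.mul_prod_erase _ _ (mem_image_of_mem f hx)]
      congr 1
      · have h2 : (s \ insert x T).filter (fun t => f t = f x) = Fx \ insert x T := by
          ext t
          simp only [mem_filter, mem_sdiff, hFx]
          tauto
        rw [h2, card_sdiff_of_subset (hins T hT), card_insert_of_notMem (hxT T hT), Nat.sub_sub,
          Nat.add_comm, ← Nat.sub_sub]
      · apply prod_congr rfl
        intro v hv
        obtain ⟨hvne, _⟩ := mem_erase.mp hv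
        congr 2
        ext t
        simp only [mem_filter, mem_sdiff]
        refine ⟨fun h => ⟨h.1.1, h.2⟩, fun h => ⟨⟨h.1, fun hmem => ?_⟩, h.2⟩⟩
        have hfx : f t = f x := (mem_filter.mp (hins T hT hmem)).2
        exact hvne (h.2 ▸ hfx ▸ rfl)
    set N := Fx.card - 1 with hN
    have hNcard : (Fx.erase x).card = N := card_erase_of_mem hxFx
    calc
      _ = ∑ p ∈ (Fx.erase x).powerset.sigma (fun T =>
            (univ : Finset (Finpartition (s \ insert x T))).filter
              (fun Q => ∀ B ∈ Q.parts, ∀ t ∈ B, ∀ u ∈ B, f t = f u)),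
          (p.1.card)! * ∏ B ∈ p.2.parts, (B.card - 1)! := bij
      _ = ∑ T ∈ (Fx.erase x).powerset, ((T.card)! * ((N - T.card)! * C)) := by
        rw [Finset.sum_sigma]
        apply Finset.sum_congr rfl
        intro T hT
        dsimp only
        rw [← Finset.mul_sum, ih _ (hssub T hT), hterm T hT, hN]
      _ = (∑ T ∈ (Fx.erase x).powerset, (T.card)! * (N - T.card)!) * C := by
        rw [Finset.sum_mul]
        exact Finset.sum_congr rfl fun T _ => (mul_assoc _ _ _).symm
      _ = (∑ _j ∈ Finset.range (N + 1), N !) * C := by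
        rw [Finset.sum_powerset, hNcard]
        congr 1
        apply Finset.sum_congr rfl
        intro j hj
        have hjN : j ≤ N := Nat.lt_succ_iff.mp (mem_range.mp hj)
        rw [Finset.sum_congr rfl (fun T hT => by
            rw [(Finset.mem_powersetCard.mp hT).2]),
          Finset.sum_const, Finset.card_powersetCard, hNcard, smul_eq_mul,
          ← Nat.choose_mul_factorial_mul_factorial hjN, mul_assoc]
      _ = (Fx.card)! * C := by
        have hN1 : N + 1 = Fx.card := by rw [hN]; omega
        rw [Finset.sum_const, Finset.card_range, smul_eq_mul, hN1, hN]
        rw [Nat.mul_factorial_pred (by omega)]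
      _ = ∏ v ∈ s.image f, ((s.filter fun t => f t = v).card)! := by
        exact Finset.mul_prod_erase (image f s) (fun v => (#(filter (fun t => f t = v) s))!) (mem_image_of_mem f hx)


private lemma perm_count {k : ℕ} (f : Fin k → ℕ) :
    ((univ : Finset (Equiv.Perm (Fin k))).filter
        (fun σ => ∀ i j : Fin k, i ≤ j → f (σ⁻¹ j) ≤ f (σ⁻¹ i))).card =
    ∏ v ∈ univ.image f, ((univ.filter fun t => f t = v).card)! := by
  set fd : Fin k → ℕᵒᵈ := fun i => OrderDual.toDual (f i) with hfd
  have hcongr : ((univ : Finset (Equiv.Perm (Fin k))).filter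
      (fun σ => ∀ i j : Fin k, i ≤ j → f (σ⁻¹ j) ≤ f (σ⁻¹ i))) =
      ((univ : Finset (Equiv.Perm (Fin k))).filter
        (fun σ : Equiv.Perm (Fin k) => fd ∘ ⇑σ⁻¹ = fd ∘ ⇑(Tuple.sort fd))) := by
    apply Finset.filter_congr
    intro σ _
    rw [Tuple.comp_sort_eq_comp_iff_monotone]
    constructor
    · intro h
      intro i j hij
      exact h i j hij
    · intro h i j hij
      exact h hij
  have hcard : ((univ : Finset (Equiv.Perm (Fin k))).filter
      (fun σ : Equiv.Perm (Fin k) => fd ∘ ⇑σ⁻¹ = fd ∘ ⇑(Tuple.sort fd))).card =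
      ((univ : Finset (Equiv.Perm (Fin k))).filter (fun τ : Equiv.Perm (Fin k) => fd ∘ ⇑τ = fd)).card := by
    apply Finset.card_bij' (i := fun σ _ => (Tuple.sort fd * σ)⁻¹)
      (j := fun τ _ => (Tuple.sort fd)⁻¹ * τ⁻¹)
    · intro σ hσ
      rw [mem_filter] at hσ ⊢
      refine ⟨mem_univ _, ?_⟩
      funext j
      have := congrFun hσ.2 ((Tuple.sort fd)⁻¹ j)
      simpa using this
    · intro τ hτ
      rw [mem_filter] at hτ ⊢
      refine ⟨mem_univ _, ?_⟩
      funext i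
      have := congrFun hτ.2 (Tuple.sort fd i)
      simpa using this
    · intro σ _; group
    · intro τ _; group
  rw [hcongr, hcard]
  have hsub : ((univ : Finset (Equiv.Perm (Fin k))).filter (fun τ : Equiv.Perm (Fin k) => fd ∘ ⇑τ = fd)).card =
      Fintype.card {g : Equiv.Perm (Fin k) // fd ∘ ⇑g = fd} :=
    (Fintype.card_subtype _).symm
  rw [hsub, DomMulAct.stabilizer_card' fd]
  have himg : Finset.image fd univ = Finset.image OrderDual.toDual (Finset.image f univ) := by
    rw [Finset.image_image]
    rfl
  rw [himg, Finset.prod_image (by intro a _ b _ h; exact OrderDual.toDual.injective h)]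
  apply Finset.prod_congr rfl
  intro v _
  congr 1
  rw [Fintype.card_subtype]
  congr 1

noncomputable def Gt (r : ℕ) (a : QLetter r) (m : ℕ) : ℂ := eps r ^ (a.2.val * m) / (m : ℂ) ^ a.1

private lemma eps_pow_r {r : ℕ} (hr : 0 < r) : eps r ^ r = 1 := by
  rw [eps, ← Complex.exp_nat_mul]
  have hr0 : (r : ℂ) ≠ 0 := Nat.cast_ne_zero.mpr hr.ne'
  have h : (r : ℂ) * (2 * Real.pi * Complex.I / r) = 2 * Real.pi * Complex.I := by
    field_simp
  rw [h, Complex.exp_two_pi_mul_I]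

private lemma eps_pow_mod {r : ℕ} (hr : 0 < r) (a : ℕ) : eps r ^ a = eps r ^ (a % r) := by
  conv_lhs => rw [← Nat.div_add_mod a r]
  rw [pow_add, pow_mul, eps_pow_r hr, one_pow, one_mul]

private lemma eps_zmod_add {r : ℕ} (hr : 0 < r) (x y : ZMod r) :
    eps r ^ (x + y).val = eps r ^ x.val * eps r ^ y.val := by
  haveI : NeZero r := ⟨hr.ne'⟩
  rw [← pow_add, ZMod.val_add, ← eps_pow_mod hr]

private lemma eps_val_sum {r : ℕ} (hr : 0 < r) {ι : Type*} (B : Finset ι) (g : ι → ZMod r) :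
    eps r ^ (∑ i ∈ B, g i).val = ∏ i ∈ B, eps r ^ (g i).val := by
  haveI : NeZero r := ⟨hr.ne'⟩
  induction B using Finset.cons_induction with
  | empty => simp
  | cons a B hab ih => rw [Finset.sum_cons, Finset.prod_cons, eps_zmod_add hr, ih]

private lemma G_merge {r : ℕ} (hr : 0 < r) {k : ℕ} (a : Fin k → QLetter r)
    (B : Finset (Fin k)) (m : ℕ) :
    Gt r (∑ i ∈ B, (a i).1, ∑ i ∈ B, (a i).2) m = ∏ t ∈ B, Gt r (a t) m := by
  unfold Gt
  rw [Finset.prod_div_distrib]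
  congr 1
  · rw [pow_mul, eps_val_sum hr, ← Finset.prod_pow]
    exact Finset.prod_congr rfl fun t _ => by rw [← pow_mul]
  · exact (Finset.prod_pow_eq_pow_sum _ _ _).symm

private lemma Aword_single (r n : ℕ) (p : ℕ) (q : ZMod r) :
    Aword r n [(p, q)] = ∑ m ∈ Finset.Icc 1 n, Gt r (p, q) m := by
  show Aword r n [(p,q)] = _
  rw [Aword]
  exact Finset.sum_congr rfl fun m _ => by rw [Aword, mul_one]; rfl

/-- weakly decreasing tuples with entries in `[1,n]` -/
def antiF (n k : ℕ) : Finset (Fin k → ℕ) :=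
  (Fintype.piFinset fun _ : Fin k => Finset.Icc 1 n).filter
    (fun m => ∀ i j : Fin k, i ≤ j → m j ≤ m i)

private lemma mem_antiF_iff {n k : ℕ} (m : Fin k → ℕ) :
    m ∈ antiF n k ↔ (∀ i, m i ∈ Finset.Icc 1 n) ∧ ∀ i j : Fin k, i ≤ j → m j ≤ m i := by
  rw [antiF, Finset.mem_filter, Fintype.mem_piFinset]

private lemma Sword_ofFn (r : ℕ) : ∀ (k : ℕ) (n : ℕ) (b : Fin k → QLetter r),
    Sword r n (List.ofFn b) = ∑ m ∈ antiF n k, ∏ s, Gt r (b s) (m s) := by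
  intro k
  induction k with
  | zero =>
    intro n b
    rw [List.ofFn_zero]
    show (1 : ℂ) = _
    have he : antiF n 0 = Fintype.piFinset fun _ : Fin 0 => Finset.Icc 1 n :=
      Finset.filter_true_of_mem (fun m _ => fun i => i.elim0)
    rw [he, Finset.sum_congr rfl (fun m _ => by rw [Finset.univ_eq_empty, Finset.prod_empty]),
      Finset.sum_const, nsmul_eq_mul, mul_one, Fintype.card_piFinset]
    simp
  | succ k ihk =>
    intro n b
    calc Sword r n (List.ofFn b)
        = ∑ m₀ ∈ Finset.Icc 1 n, Gt r (b 0) m₀ *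
            Sword r m₀ (List.ofFn fun i : Fin k => b i.succ) := by
          rw [List.ofFn_succ, Sword]
          rfl
      _ = ∑ p ∈ (Finset.Icc 1 n).sigma (fun m₀ => antiF m₀ k),
            Gt r (b 0) p.1 * ∏ s, Gt r (b s.succ) (p.2 s) := by
          rw [Finset.sum_sigma]
          exact Finset.sum_congr rfl fun m₀ _ => by rw [ihk, Finset.mul_sum]
      _ = ∑ m ∈ antiF n (k+1), ∏ s, Gt r (b s) (m s) := by
          apply Finset.sum_bij' (i := fun p _ => Fin.cons p.1 p.2)
            (j := fun m _ => (⟨m 0, fun i => m i.succ⟩ : Σ _ : ℕ, (Fin k → ℕ)))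
          case hi =>
            rintro ⟨m₀, mm⟩ hp
            obtain ⟨h₀, hmm⟩ := Finset.mem_sigma.mp hp
            obtain ⟨hpi, hanti⟩ := (mem_antiF_iff mm).mp hmm
            obtain ⟨h01, h0n⟩ := Finset.mem_Icc.mp h₀
            rw [mem_antiF_iff]
            constructor
            · intro s
              refine Fin.cases ?_ ?_ s
              · simpa using h₀
              · intro i
                rw [Fin.cons_succ]
                have hi := Finset.mem_Icc.mp (hpi i)
                exact Finset.mem_Icc.mpr ⟨hi.1, hi.2.trans h0n⟩
            · intro i j hij
              rcases Fin.eq_zero_or_eq_succ j with rfl | ⟨j', rfl⟩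
              · have : i = 0 := Fin.le_zero_iff.mp hij
                subst this
                exact le_refl _
              · rcases Fin.eq_zero_or_eq_succ i with rfl | ⟨i', rfl⟩
                · rw [Fin.cons_zero, Fin.cons_succ]
                  exact (Finset.mem_Icc.mp (hpi j')).2
                · rw [Fin.cons_succ, Fin.cons_succ]
                  exact hanti i' j' (Fin.succ_le_succ_iff.mp hij)
          case hj =>
            intro m hm
            obtain ⟨hpi, hanti⟩ := (mem_antiF_iff m).mp hm
            rw [Finset.mem_sigma]
            refine ⟨hpi 0, ?_⟩
            rw [mem_antiF_iff]
            constructor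
            · intro i
              refine Finset.mem_Icc.mpr ⟨(Finset.mem_Icc.mp (hpi i.succ)).1, ?_⟩
              exact hanti 0 i.succ (Fin.zero_le _)
            · intro i j hij
              exact hanti i.succ j.succ (Fin.succ_le_succ_iff.mpr hij)
          case left_neg =>
            rintro ⟨m₀, mm⟩ _
            simp [Fin.cons_zero, Fin.cons_succ]
          case right_neg =>
            intro m _
            exact Fin.cons_self_tail m
          case h =>
            intro p _
            rw [Fin.prod_univ_succ]
            simp [Fin.cons_zero, Fin.cons_succ]

end Aux


set_option maxHeartbeats 2000000 in
/-- Symmetric combinations of the weak sums `S` in terms of length-one sums. -/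
theorem symmetric_S (r : ℕ) (hr : 0 < r) (n : ℕ) (hn : 0 < n) (k : ℕ)
    (a : Fin k → QLetter r) (hpos : ∀ s, 0 < (a s).1) :
    (∑ σ : Equiv.Perm (Fin k), Sword r n (List.ofFn fun s => a (σ⁻¹ s))) =
      ∑ P : Finpartition (Finset.univ : Finset (Fin k)),
        (∏ B ∈ P.parts, (Nat.factorial (B.card - 1) : ℂ)) *
          ∏ B ∈ P.parts, Aword r n [(∑ i ∈ B, (a i).1, ∑ i ∈ B, (a i).2)] := by
  set F : (Fin k → ℕ) → ℂ := fun g => ∏ t, Gt r (a t) (g t) with hF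
  set piF := Fintype.piFinset (fun _ : Fin k => Finset.Icc 1 n) with hpiF
  -- LHS
  have step1 : ∀ σ : Equiv.Perm (Fin k),
      Sword r n (List.ofFn fun s => a (σ⁻¹ s)) =
      ∑ g ∈ piF.filter (fun g => ∀ i j : Fin k, i ≤ j → g (σ⁻¹ j) ≤ g (σ⁻¹ i)), F g := by
    intro σ
    rw [Sword_ofFn]
    apply Finset.sum_bij' (i := fun m _ => fun t => m (σ t)) (j := fun g _ => fun s => g (σ⁻¹ s))
    case hi =>
      intro m hm
      obtain ⟨hpi, hanti⟩ := (mem_antiF_iff m).mp hm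
      rw [Finset.mem_filter, hpiF, Fintype.mem_piFinset]
      refine ⟨fun t => hpi (σ t), ?_⟩
      intro i j hij
      simpa using hanti i j hij
    case hj =>
      intro g hg
      obtain ⟨hpi', hcond⟩ := Finset.mem_filter.mp hg
      rw [hpiF, Fintype.mem_piFinset] at hpi'
      rw [mem_antiF_iff]
      exact ⟨fun s => hpi' (σ⁻¹ s), hcond⟩
    case left_neg =>
      intro m _
      funext s
      simp
    case right_neg =>
      intro g _
      funext t
      simp
    case h =>
      intro m _
      rw [hF]
      refine (Fintype.prod_equiv σ _ _ ?_).symm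
      intro t
      simp
  have lhs : (∑ σ : Equiv.Perm (Fin k), Sword r n (List.ofFn fun s => a (σ⁻¹ s))) =
      ∑ g ∈ piF,
        (((Finset.univ : Finset (Equiv.Perm (Fin k))).filter
          (fun σ => ∀ i j : Fin k, i ≤ j → g (σ⁻¹ j) ≤ g (σ⁻¹ i))).card : ℂ) * F g := by
    rw [Finset.sum_congr rfl (fun σ _ => step1 σ),
      Finset.sum_congr rfl (fun σ _ => Finset.sum_filter _ _), Finset.sum_comm]
    apply Finset.sum_congr rfl
    intro g _
    rw [← Finset.sum_filter, Finset.sum_const, nsmul_eq_mul]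
  -- RHS
  have stepP : ∀ P : Finpartition (Finset.univ : Finset (Fin k)),
      (∏ B ∈ P.parts, Aword r n [(∑ i ∈ B, (a i).1, ∑ i ∈ B, (a i).2)]) =
      ∑ g ∈ piF.filter (fun g => ∀ B ∈ P.parts, ∀ t ∈ B, ∀ u ∈ B, g t = g u), F g := by
    intro P
    rw [Finset.prod_congr rfl (fun B _ => by
      rw [Aword_single, Finset.sum_congr rfl (fun m _ => G_merge hr a B m)])]
    rw [Finset.prod_sum]
    apply Finset.sum_bij'
      (i := fun (ph : (B : Finset (Fin k)) → B ∈ P.parts → ℕ) (_ : ph ∈ P.parts.pi fun _ => Finset.Icc 1 n) =>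
        fun t : Fin k => ph (P.part t) (P.part_mem.mpr (Finset.mem_univ t)))
      (j := fun (g : Fin k → ℕ) _ => fun (B : Finset (Fin k)) (hB : B ∈ P.parts) =>
        g (P.nonempty_of_mem_parts hB).choose)
    case hi =>
      intro ph hph
      rw [Finset.mem_filter, hpiF, Fintype.mem_piFinset]
      constructor
      · intro t
        exact Finset.mem_pi.mp hph (P.part t) (P.part_mem.mpr (Finset.mem_univ t))
      · intro B hB t ht u hu
        simp only [P.part_eq_of_mem hB ht, P.part_eq_of_mem hB hu]
    case hj =>
      intro g hg
      obtain ⟨hpi', _⟩ := Finset.mem_filter.mp hg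
      rw [hpiF, Fintype.mem_piFinset] at hpi'
      rw [Finset.mem_pi]
      intro B hB
      exact hpi' _
    case left_neg =>
      intro ph hph
      funext B hB
      have hch : (P.nonempty_of_mem_parts hB).choose ∈ B := (P.nonempty_of_mem_parts hB).choose_spec
      simp only [P.part_eq_of_mem hB hch]
    case right_neg =>
      intro g hg
      obtain ⟨_, hcond⟩ := Finset.mem_filter.mp hg
      funext t
      have hB := P.part_mem.mpr (Finset.mem_univ t)
      have hch : (P.nonempty_of_mem_parts hB).choose ∈ P.part t :=
        (P.nonempty_of_mem_parts hB).choose_spec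
      exact hcond (P.part t) hB _ hch t (P.mem_part (Finset.mem_univ t))
    case h =>
      intro ph hph
      have h1 : ∀ x : {B // B ∈ P.parts}, ∀ t ∈ x.1,
          ph x.1 x.2 = ph (P.part t) (P.part_mem.mpr (Finset.mem_univ t)) := by
        rintro ⟨B, hB⟩ t ht
        simp only [P.part_eq_of_mem hB ht]
      calc ∏ x ∈ P.parts.attach, ∏ t ∈ x.1, Gt r (a t) (ph x.1 x.2)
          = ∏ x ∈ P.parts.attach, ∏ t ∈ x.1,
              Gt r (a t) (ph (P.part t) (P.part_mem.mpr (Finset.mem_univ t))) := by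
            exact Finset.prod_congr rfl fun x _ =>
              Finset.prod_congr rfl fun t ht => by rw [h1 x t ht]
        _ = ∏ B ∈ P.parts, ∏ t ∈ B,
              Gt r (a t) (ph (P.part t) (P.part_mem.mpr (Finset.mem_univ t))) :=
            Finset.prod_attach P.parts
              (fun B => ∏ t ∈ B, Gt r (a t) (ph (P.part t) (P.part_mem.mpr (Finset.mem_univ t))))
        _ = ∏ t ∈ P.parts.biUnion id,
              Gt r (a t) (ph (P.part t) (P.part_mem.mpr (Finset.mem_univ t))) :=
            (Finset.prod_biUnion P.supIndep.pairwiseDisjoint).symm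
        _ = ∏ t, Gt r (a t) (ph (P.part t) (P.part_mem.mpr (Finset.mem_univ t))) := by
            rw [P.biUnion_parts]
  have rhs : (∑ P : Finpartition (Finset.univ : Finset (Fin k)),
        (∏ B ∈ P.parts, (Nat.factorial (B.card - 1) : ℂ)) *
          ∏ B ∈ P.parts, Aword r n [(∑ i ∈ B, (a i).1, ∑ i ∈ B, (a i).2)]) =
      ∑ g ∈ piF,
        ((∑ P ∈ (Finset.univ : Finset (Finpartition (Finset.univ : Finset (Fin k)))).filter
            (fun P => ∀ B ∈ P.parts, ∀ t ∈ B, ∀ u ∈ B, g t = g u),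
          ∏ B ∈ P.parts, (B.card - 1)! : ℕ) : ℂ) * F g := by
    rw [Finset.sum_congr rfl (fun P _ => by
      rw [stepP P, Finset.mul_sum, Finset.sum_filter])]
    rw [Finset.sum_comm]
    apply Finset.sum_congr rfl
    intro g _
    rw [Finset.sum_filter, Nat.cast_sum, Finset.sum_mul]
    apply Finset.sum_congr rfl
    intro P _
    by_cases hc : ∀ B ∈ P.parts, ∀ t ∈ B, ∀ u ∈ B, g t = g u
    · rw [if_pos hc, if_pos hc, Nat.cast_prod]
    · rw [if_neg hc, if_neg hc, Nat.cast_zero, zero_mul]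
  rw [lhs, rhs]
  apply Finset.sum_congr rfl
  intro g _
  congr 1
  refine congrArg Nat.cast ?_
  rw [perm_count g]
  refine ((key_count g Finset.univ).symm).trans ?_
  exact Finset.sum_congr (by congr) fun _ _ => rfl
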